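/- Let R be a (possibly noncommutative) ring, let K₁, K₂, m ≥ 1 and X ≥ 0 be integers, and let p_A, p_B be the SEP encoding polynomials over R built from elements A_{j,k}, B_{j,k}, R_i, T_i. Set k = (K₂+1)(K₁m+X) − m. Then for every 1 ≤ i ≤ K₁ and 1 ≤ j ≤ K₂, the coefficient of x^{(m−1)+(i−1)m+(j−1)(K₁m+X)} in the remainder of p_A(x)·p_B(x) upon division by x^k − 1 equals Σ_{k'=1}^{m} A_{i,k'}·B_{k',j}. -/

import Mathlib

open Polynomial Finset

/-!
Write `s = K₁m + X` and `d = (m-1) + im + js` (0-based indices). The product `p_A p_B` has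
degree at most `(K₂+1)s - 2 < k + d`, so its quotient by `x^k - 1` has degree `< d`; as `d < k`,
the reduction modulo `x^k - 1` leaves the coefficient of `x^d` untouched. In the product itself,
the only monomial pairs reaching `x^d` are `A_{i,k'} x^{k'+im}` times `B_{k',j} x^{(m-1-k')+js}`:
comparing exponents first up to multiples of `s` and then in base `m` forces the indices, while
the noise terms of `p_B` all sit above `x^d` and those of `p_A` are too high within their
block of width `s`.
-/

/-- The SEP encoding polynomial of `A` (blocks `A j k` for `j < K₁`, `k < m`,
noise `Rn i` for `i < Xs`), with 0-based indices. `Xs` is the security parameter. -/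
noncomputable def sepA {R : Type*} [Ring R] (K₁ m Xs : ℕ)
    (A : Fin K₁ → Fin m → R) (Rn : Fin Xs → R) : R[X] :=
  (∑ j : Fin K₁, ∑ k : Fin m, monomial (k.val + j.val * m) (A j k))
    + ∑ i : Fin Xs, monomial (K₁ * m + i.val) (Rn i)

/-- The SEP encoding polynomial of `B` (blocks `B j k` for `j < m`, `k < K₂`,
noise `T i` for `i < Xs`), with 0-based indices. -/
noncomputable def sepB {R : Type*} [Ring R] (K₁ K₂ m Xs : ℕ)
    (B : Fin m → Fin K₂ → R) (T : Fin Xs → R) : R[X] :=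
  (∑ j : Fin m, ∑ k : Fin K₂, monomial ((m - 1 - j.val) + k.val * (K₁ * m + Xs)) (B j k))
    + ∑ i : Fin Xs, monomial ((K₂ - 1) * (K₁ * m + Xs) + K₁ * m + i.val) (T i)

theorem Nat.eq_and_eq_of_add_mul_eq_add_mul {u v a b s : ℕ} (h : u + a * s = v + b * s)
    (hu : u < v + s) (hv : v < u + s) : u = v ∧ a = b := by
  obtain rfl : a = b := by
    by_contra hab
    rcases Nat.lt_or_gt_of_ne hab with hlt | hlt <;>
    · have := Nat.mul_le_mul_right s hlt
      rw [Nat.succ_mul] at this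
      omega
  exact ⟨by omega, rfl⟩

namespace Polynomial

variable {R : Type*} [Ring R]

theorem coeff_mul_eq_zero_of_coeff_eq_zero_of_lt {f g : R[X]} {N d : ℕ}
    (hg : ∀ b < N, g.coeff b = 0) (hd : d < N) : (f * g).coeff d = 0 := by
  rw [coeff_mul]
  refine sum_eq_zero fun x hx => ?_
  rw [hg x.2 (by have := mem_antidiagonal.mp hx; omega), mul_zero]

theorem coeff_modByMonic_X_pow_sub_one {P : R[X]} {k d : ℕ} (hd : d < k)
    (hP : P.natDegree < k + d) : (P %ₘ (X ^ k - 1)).coeff d = P.coeff d := by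
  nontriviality R
  have hq : (X ^ k - 1 : R[X]).Monic := by
    simpa using monic_X_pow_sub_C (1 : R) (n := k) (by omega)
  have hqdeg : (X ^ k - 1 : R[X]).natDegree = k := by
    simpa using natDegree_X_pow_sub_C (n := k) (r := (1 : R))
  by_cases hPk : P.natDegree < k
  · rw [(modByMonic_eq_self_iff hq).mpr]
    rw [degree_eq_natDegree hq.ne_zero, hqdeg]
    exact (degree_le_natDegree).trans_lt (by exact_mod_cast hPk)
  · have hQ : (P /ₘ (X ^ k - 1)).coeff d = 0 := by
      refine coeff_eq_zero_of_natDegree_lt ?_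
      rw [natDegree_divByMonic _ hq, hqdeg]
      omega
    rw [modByMonic_eq_sub_mul_div, coeff_sub, sub_mul, one_mul, X_pow_mul, coeff_sub,
      coeff_mul_X_pow', if_neg (by omega), hQ]
    simp

end Polynomial

section SEP

variable {R : Type*} [Ring R] {K₁ K₂ m Xs : ℕ}

theorem sep_block_exponent_eq_iff {s i j j' k' j'' k'' : ℕ} (hs : K₁ * m ≤ s)
    (hi : i < K₁) (hj' : j' < K₁) (hk' : k' < m) (hj'' : j'' < m) :
    k' + j' * m + (m - 1 - j'' + k'' * s) = m - 1 + i * m + j * s ↔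
      j' = i ∧ j'' = k' ∧ k'' = j := by
  have hA : k' + j' * m < K₁ * m := by
    simpa only [mul_comm] using Nat.add_mul_lt_mul_of_lt_of_lt hk' hj'
  have him := Nat.mul_le_mul_right m hi
  rw [Nat.succ_mul] at him
  constructor
  · intro h
    obtain ⟨hu, rfl⟩ := Nat.eq_and_eq_of_add_mul_eq_add_mul
      (u := k' + j' * m + (m - 1 - j'')) (a := k'') (v := m - 1 + i * m) (b := j) (s := s)
      (by omega) (by omega) (by omega)
    obtain ⟨rfl, rfl⟩ := Nat.eq_and_eq_of_add_mul_eq_add_mul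
      (u := k') (a := j') (v := j'') (b := i) (s := m) (by omega) (by omega) (by omega)
    exact ⟨rfl, rfl, rfl⟩
  · rintro ⟨rfl, rfl, rfl⟩
    omega

theorem sep_noise_exponent_ne {s i j i' j'' k'' : ℕ} (hi : i < K₁) (hi' : K₁ * m + i' < s)
    (hj'' : j'' < m) :
    K₁ * m + i' + (m - 1 - j'' + k'' * s) ≠ m - 1 + i * m + j * s := by
  have him := Nat.mul_le_mul_right m hi
  rw [Nat.succ_mul] at him
  intro h
  obtain ⟨hu, -⟩ := Nat.eq_and_eq_of_add_mul_eq_add_mul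
    (u := K₁ * m + i' + (m - 1 - j'')) (a := k'') (v := m - 1 + i * m) (b := j) (s := s)
    (by omega) (by omega) (by omega)
  omega

theorem natDegree_sepA_le (A : Fin K₁ → Fin m → R) (Rn : Fin Xs → R) :
    (sepA K₁ m Xs A Rn).natDegree ≤ K₁ * m + Xs - 1 := by
  refine natDegree_add_le_of_degree_le
    (natDegree_sum_le_of_forall_le _ _ fun j' _ => natDegree_sum_le_of_forall_le _ _ fun k' _ =>
      (natDegree_monomial_le _).trans ?_)
    (natDegree_sum_le_of_forall_le _ _ fun i' _ => (natDegree_monomial_le _).trans ?_)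
  · have : k'.val + j' * m < K₁ * m := by
      simpa only [mul_comm] using Nat.add_mul_lt_mul_of_lt_of_lt k'.isLt j'.isLt
    omega
  · omega

theorem natDegree_sepB_le (hK₁ : 0 < K₁) (hK₂ : 0 < K₂) (B : Fin m → Fin K₂ → R)
    (T : Fin Xs → R) : (sepB K₁ K₂ m Xs B T).natDegree ≤ K₂ * (K₁ * m + Xs) - 1 := by
  have hms : m ≤ K₁ * m := Nat.le_mul_of_pos_left m hK₁
  refine natDegree_add_le_of_degree_le
    (natDegree_sum_le_of_forall_le _ _ fun j' _ => natDegree_sum_le_of_forall_le _ _ fun k' _ =>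
      (natDegree_monomial_le _).trans ?_)
    (natDegree_sum_le_of_forall_le _ _ fun i' _ => (natDegree_monomial_le _).trans ?_)
  · have := Nat.mul_le_mul_right (K₁ * m + Xs) k'.isLt
    rw [Nat.succ_mul] at this
    omega
  · obtain ⟨K, rfl⟩ : ∃ K, K₂ = K + 1 := ⟨K₂ - 1, by omega⟩
    rw [Nat.add_sub_cancel, Nat.succ_mul]
    omega

theorem coeff_sepA_mul_sepB (hm : 1 ≤ m) (A : Fin K₁ → Fin m → R)
    (B : Fin m → Fin K₂ → R) (Rn : Fin Xs → R) (T : Fin Xs → R)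
    (i : Fin K₁) (j : Fin K₂) :
    (sepA K₁ m Xs A Rn * sepB K₁ K₂ m Xs B T).coeff (m - 1 + i * m + j * (K₁ * m + Xs)) =
      ∑ k' : Fin m, A i k' * B k' j := by
  have hs : K₁ * m ≤ K₁ * m + Xs := Nat.le_add_right _ _
  have hi := Nat.mul_le_mul_right m i.isLt
  have hj := Nat.mul_le_mul_right (K₁ * m + Xs) (Nat.le_sub_one_of_lt j.isLt)
  rw [Nat.succ_mul] at hi
  have hT : ∀ b < (K₂ - 1) * (K₁ * m + Xs) + K₁ * m,
      (∑ i' : Fin Xs, monomial ((K₂ - 1) * (K₁ * m + Xs) + K₁ * m + i'.val) (T i')).coeff b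
        = 0 := by
    intro b hb
    simp only [finsetSum_coeff, coeff_monomial]
    exact sum_eq_zero fun i' _ => if_neg (by omega)
  rw [sepA, sepB, mul_add, coeff_add, coeff_mul_eq_zero_of_coeff_eq_zero_of_lt hT (by omega),
    add_zero, add_mul, coeff_add]
  simp only [sum_mul, mul_sum, finsetSum_coeff, monomial_mul_monomial, coeff_monomial]
  rw [sum_eq_zero fun j'' _ => sum_eq_zero fun k'' _ => sum_eq_zero fun i' _ =>
    if_neg (sep_noise_exponent_ne i.isLt (by omega) j''.isLt), add_zero]
  calc _ = ∑ j'' : Fin m, ∑ k'' : Fin K₂, ∑ j' : Fin K₁, ∑ k' : Fin m,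
        if j' = i ∧ j'' = k' ∧ k'' = j then A j' k' * B j'' k'' else 0 := by
        refine sum_congr rfl fun j'' _ => sum_congr rfl fun k'' _ => sum_congr rfl fun j' _ =>
          sum_congr rfl fun k' _ => if_congr ?_ rfl rfl
        rw [sep_block_exponent_eq_iff hs i.isLt j'.isLt k'.isLt j''.isLt]
        simp only [Fin.val_inj]
    _ = _ := by simp [ite_and]

end SEP

theorem stmt_6_general {R : Type*} [Ring R] (K₁ K₂ m Xs : ℕ)
    (hm : 1 ≤ m)
    (A : Fin K₁ → Fin m → R) (B : Fin m → Fin K₂ → R)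
    (Rn : Fin Xs → R) (T : Fin Xs → R)
    (k : ℕ) (hk : k = (K₂ + 1) * (K₁ * m + Xs) - m)
    (i : Fin K₁) (j : Fin K₂) :
    ((sepA K₁ m Xs A Rn * sepB K₁ K₂ m Xs B T) %ₘ (X ^ k - 1)).coeff
        ((m - 1) + i.val * m + j.val * (K₁ * m + Xs))
      = ∑ k' : Fin m, A i k' * B k' j := by
  have hms : m ≤ K₁ * m := Nat.le_mul_of_pos_left m i.pos
  have hi := Nat.mul_le_mul_right m i.isLt
  have hj := Nat.mul_le_mul_right (K₁ * m + Xs) j.isLt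
  rw [Nat.succ_mul] at hi hj
  rw [add_one_mul] at hk
  have hdeg := natDegree_mul_le.trans (add_le_add (natDegree_sepA_le A Rn)
    (natDegree_sepB_le i.pos j.pos B T))
  rw [coeff_modByMonic_X_pow_sub_one (by omega) (by omega), coeff_sepA_mul_sepB hm]

/-- Theorem 1 (SEP-DFT): reducing the product of the SEP encoding polynomials modulo
`x^k - 1` with `k = (K₂+1)(K₁m+Xs) - m` preserves all the desired block coefficients
`C_{i,j} = Σ_{k'} A_{i,k'} B_{k',j}`. -/
theorem stmt_6 {R : Type*} [Ring R] (K₁ K₂ m Xs : ℕ)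
    (hK₁ : 1 ≤ K₁) (hK₂ : 1 ≤ K₂) (hm : 1 ≤ m)
    (A : Fin K₁ → Fin m → R) (B : Fin m → Fin K₂ → R)
    (Rn : Fin Xs → R) (T : Fin Xs → R)
    (k : ℕ) (hk : k = (K₂ + 1) * (K₁ * m + Xs) - m)
    (i : Fin K₁) (j : Fin K₂) :
    ((sepA K₁ m Xs A Rn * sepB K₁ K₂ m Xs B T) %ₘ (X ^ k - 1)).coeff
        ((m - 1) + i.val * m + j.val * (K₁ * m + Xs))
      = ∑ k' : Fin m, A i k' * B k' j :=
  stmt_6_general K₁ K₂ m Xs hm A B Rn T k hk i j
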